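/- arXiv:2407.17134 — 5 statements merged into one kernel-verified Lean document; each statement's English description precedes it below -/
import Mathlib

section
/- Let V be a near-vector space over a scalar group F and u a nonzero element of the quasi-kernel. For every nonzero λ in the set 𝔡_u of distributive elements of the near-field F_u = (F, +_u, ·), one has +_{λu} = +_u. -/
/-! Since `α • (λ • u) = (α * λ) • u`, the sum `α • (λu) + β • (λu)` is `(αλ +_u βλ) • u`,
which distributivity of `λ` turns into `((α +_u β) λ) • u = (α +_u β) • (λu)`. Freeness of the
action on `u` and cancelling the nonzero `λ` then identify `α +_{λu} β` with `α +_u β`. -/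

/-- A scalar group `(F, ·, 1, 0, -1)`: a monoid with an absorbing zero such that
`(F \ {0}, ·)` is a group and `{±1}` is the solution set of `x² = 1`. -/
class ScalarGroup (F : Type*) extends Monoid F, Zero F, Inv F where
  negOne : F
  zero_mul : ∀ a : F, 0 * a = 0
  mul_zero : ∀ a : F, a * 0 = 0
  one_ne_zero : (1 : F) ≠ 0
  sq_iff : ∀ x : F, x * x = 1 ↔ x = 1 ∨ x = negOne
  mul_inv_cancel : ∀ a : F, a ≠ 0 → a * a⁻¹ = 1
  inv_mul_cancel : ∀ a : F, a ≠ 0 → a⁻¹ * a = 1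

/-- A (left) near-vector space over a scalar group `F`: an additive abelian
group `V` with a free action of `F` by additive endomorphisms, such that the
quasi-kernel generates `V` as an additive group. -/
class NearVectorSpace (F V : Type*) [ScalarGroup F] [AddCommGroup V] extends
    SMul F V where
  one_smul : ∀ v : V, (1 : F) • v = v
  mul_smul : ∀ (a b : F) (v : V), (a * b) • v = a • (b • v)
  smul_add : ∀ (a : F) (v w : V), a • (v + w) = a • v + a • w
  zero_smul : ∀ v : V, (0 : F) • v = 0
  free : ∀ (a b : F) (v : V), v ≠ 0 → a • v = b • v → a = b
  gen : AddSubgroup.closure {v : V | ∀ α β : F, ∃ γ : F, α • v + β • v = γ • v} = ⊤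

/-- The quasi-kernel `Q(V)` of a near-vector space. -/
def quasiKernel (F V : Type*) [ScalarGroup F] [AddCommGroup V] [NearVectorSpace F V] :
    Set V :=
  {v : V | ∀ α β : F, ∃ γ : F, α • v + β • v = γ • v}

/-- The distributive elements `𝔡_u` of the near-field `F_u = (F, +_u, ·)`, where
`p = +_u` is the addition induced by a nonzero quasi-kernel element `u`. -/
def dstrU {F : Type*} [ScalarGroup F] (p : F → F → F) : Set F :=
  {γ : F | ∀ α β : F, p α β * γ = p (α * γ) (β * γ)}

/-- `Q_u(V)`: the set of quasi-kernel elements whose induced addition is `p = +_u`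
(together with `0`, which satisfies the condition trivially). -/
def QU (F V : Type*) [ScalarGroup F] [AddCommGroup V] [NearVectorSpace F V]
    (p : F → F → F) : Set V :=
  {v : V | v ∈ quasiKernel F V ∧ ∀ α β : F, α • v + β • v = p α β • v}

/-- Iterated sum with respect to the addition `p = +_u` (whose neutral element is `0`). -/
def usum {F : Type*} [ScalarGroup F] (p : F → F → F) : List F → F
  | [] => 0
  | a :: l => p a (usum p l)

theorem ScalarGroup.mul_right_cancel_of_ne_zero {F : Type*} [ScalarGroup F] {a b c : F}
    (hc : c ≠ 0) (h : a * c = b * c) : a = b :=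
  calc a = a * c * c⁻¹ := by rw [mul_assoc, ScalarGroup.mul_inv_cancel c hc, mul_one]
    _ = b * c * c⁻¹ := by rw [h]
    _ = b := by rw [mul_assoc, ScalarGroup.mul_inv_cancel c hc, mul_one]

theorem NearVectorSpace.smul_smul_add_smul_smul_of_mem_dstrU {F V : Type*} [ScalarGroup F]
    [AddCommGroup V] [NearVectorSpace F V] {u : V} {p : F → F → F}
    (hp : ∀ α β : F, α • u + β • u = p α β • u) {lam : F} (hlamd : lam ∈ dstrU p) (α β : F) :
    α • (lam • u) + β • (lam • u) = (p α β * lam) • u := by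
  rw [← NearVectorSpace.mul_smul, ← NearVectorSpace.mul_smul, hp, hlamd]

theorem stmt4_general (F V : Type*) [ScalarGroup F] [AddCommGroup V] [NearVectorSpace F V]
    (u : V) (hu0 : u ≠ 0)
    (p : F → F → F) (hp : ∀ α β : F, α • u + β • u = p α β • u)
    (lam : F) (hlam : lam ≠ 0) (hlamd : lam ∈ dstrU p)
    (q : F → F → F)
    (hq : ∀ α β : F, α • (lam • u) + β • (lam • u) = q α β • (lam • u)) :
    q = p := by
  funext α β
  apply ScalarGroup.mul_right_cancel_of_ne_zero hlam
  apply NearVectorSpace.free _ _ u hu0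
  rw [NearVectorSpace.mul_smul, ← hq,
    NearVectorSpace.smul_smul_add_smul_smul_of_mem_dstrU hp hlamd]

/-- For a nonzero quasi-kernel element `u` and every nonzero distributive element
`λ ∈ 𝔡_u*` of the near-field `F_u = (F, +_u, ·)`, one has `+_{λu} = +_u`. -/
theorem stmt4 (F V : Type*) [ScalarGroup F] [AddCommGroup V] [NearVectorSpace F V]
    (u : V) (hu : u ∈ quasiKernel F V) (hu0 : u ≠ 0)
    (p : F → F → F) (hp : ∀ α β : F, α • u + β • u = p α β • u)
    (lam : F) (hlam : lam ≠ 0) (hlamd : lam ∈ dstrU p)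
    (q : F → F → F)
    (hq : ∀ α β : F, α • (lam • u) + β • (lam • u) = q α β • (lam • u)) :
    q = p :=
  stmt4_general F V u hu0 p hp lam hlam hlamd q hq
end

section
/- Let V be a near-vector space over a scalar group F, u a nonzero element of the quasi-kernel, and λ a nonzero element of F. Then Q_u(V) is a vector space over 𝔡_{λu} under the addition of V and the scalar multiplication α ⋆ v = (λ⁻¹αλ)·v, and this vector space is isomorphic (as a near-vector space, via the pair (Id, η) with η(α) = λαλ⁻¹) to the vector space Q_u(V) over 𝔡_u. -/
section Conjugation

variable {F : Type*} [ScalarGroup F] {p q : F → F → F}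

theorem ScalarGroup.val_inv_eq_inv_val (a : Fˣ) : ((a⁻¹ : Fˣ) : F) = (a : F)⁻¹ := by
  have ha : (a : F) ≠ 0 := fun h => ScalarGroup.one_ne_zero (F := F) <| by
    rw [← a.mul_inv, h, ScalarGroup.zero_mul]
  calc ((a⁻¹ : Fˣ) : F) = (a : F)⁻¹ * a * ↑a⁻¹ := by
        rw [ScalarGroup.inv_mul_cancel _ ha, one_mul]
    _ = (a : F)⁻¹ := by rw [mul_assoc, a.mul_inv, mul_one]

theorem conj_mem_dstrU (a : Fˣ) (hpq : ∀ α β, p (α * a) (β * a) = q α β * a) {d : F}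
    (hd : d ∈ dstrU p) : (a : F) * d * ↑a⁻¹ ∈ dstrU q := by
  intro α β
  calc q α β * (a * d * ↑a⁻¹) = p (α * a) (β * a) * d * ↑a⁻¹ := by
        rw [hpq]; simp only [mul_assoc]
    _ = p (α * (a * d * ↑a⁻¹) * a) (β * (a * d * ↑a⁻¹) * a) * ↑a⁻¹ := by
        rw [hd]; simp only [mul_assoc, Units.inv_mul, mul_one]
    _ = q (α * (a * d * ↑a⁻¹)) (β * (a * d * ↑a⁻¹)) := by
        rw [hpq, Units.mul_inv_cancel_right]

theorem mul_val_inv_of_mul_val (a : Fˣ) (hpq : ∀ α β, p (α * a) (β * a) = q α β * a)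
    (α β : F) :
    q (α * ↑a⁻¹) (β * ↑a⁻¹) = p α β * ↑a⁻¹ := by
  rw [← Units.mul_inv_cancel_right (q _ _) a, ← hpq, Units.inv_mul_cancel_right,
    Units.inv_mul_cancel_right]

theorem bijOn_conj_dstrU (a : Fˣ) (hpq : ∀ α β, p (α * a) (β * a) = q α β * a) :
    Set.BijOn (fun d => (a : F) * d * ↑a⁻¹) (dstrU p) (dstrU q) := by
  refine Set.InvOn.bijOn (f' := fun d => (↑a⁻¹ : F) * d * a)
    ⟨fun d _ => by simp [mul_assoc], fun d _ => by simp [mul_assoc]⟩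
    (fun d => conj_mem_dstrU a hpq) (fun d hd => ?_)
  simpa using conj_mem_dstrU a⁻¹ (mul_val_inv_of_mul_val a hpq) hd

end Conjugation

namespace NearVectorSpace

variable {F V : Type*} [ScalarGroup F] [AddCommGroup V] [NearVectorSpace F V]

/-- `IsInducedAdd p v` says that `p` is the addition `+_v`. -/
def IsInducedAdd (p : F → F → F) (v : V) : Prop :=
  ∀ α β : F, α • v + β • v = p α β • v

theorem smul_ne_zero {a : F} (ha : a ≠ 0) {v : V} (hv : v ≠ 0) : a • v ≠ 0 := fun h =>
  ha <| free a 0 v hv <| by rw [h, zero_smul]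

namespace IsInducedAdd

variable {p q : F → F → F}

theorem mem_quasiKernel {v : V} (hv : IsInducedAdd p v) : v ∈ quasiKernel F V :=
  fun α β => ⟨p α β, hv α β⟩

theorem mul_left {w : V} (hq : IsInducedAdd q w) (hw : w ≠ 0) (γ α β : F) :
    γ * q α β = q (γ * α) (γ * β) :=
  free _ _ w hw <| by rw [mul_smul, ← hq, smul_add, ← mul_smul, ← mul_smul, hq]

theorem mul_right {u : V} (hp : IsInducedAdd p u) {a : F} (hq : IsInducedAdd q (a • u))
    (hu : u ≠ 0) (α β : F) : p (α * a) (β * a) = q α β * a :=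
  free _ _ u hu <| by rw [← hp, mul_smul, mul_smul, mul_smul, hq]

theorem smul {v : V} (hv : IsInducedAdd p v) {e : F} (he : e ∈ dstrU p) :
    IsInducedAdd p (e • v) := fun α β => by
  rw [← mul_smul, ← mul_smul, ← mul_smul, hv, ← he]

end IsInducedAdd

theorem smul_mem_QU {p : F → F → F} {e : F} (he : e ∈ dstrU p) {v : V} (hv : v ∈ QU F V p) :
    e • v ∈ QU F V p :=
  have h : IsInducedAdd p (e • v) := IsInducedAdd.smul hv.2 he
  ⟨h.mem_quasiKernel, h⟩

end NearVectorSpace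

theorem stmt9_general (F V : Type*) [ScalarGroup F] [AddCommGroup V] [NearVectorSpace F V]
    (u : V) (hu0 : u ≠ 0)
    (lam : F) (hlam : lam ≠ 0)
    (p q : F → F → F)
    (hp : ∀ α β : F, α • u + β • u = p α β • u)
    (hq : ∀ α β : F, α • (lam • u) + β • (lam • u) = q α β • (lam • u)) :
    -- `⋆` is a vector space structure of `𝔡_{λu}` on `Q_u(V)`
    (∀ d ∈ dstrU q, ∀ v ∈ QU F V p, (lam⁻¹ * d * lam) • v ∈ QU F V p) ∧
    (∀ d ∈ dstrU q, ∀ e ∈ dstrU q, ∀ v ∈ QU F V p,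
      (lam⁻¹ * d * lam) • v + (lam⁻¹ * e * lam) • v = (lam⁻¹ * q d e * lam) • v) ∧
    (∀ v ∈ QU F V p, (lam⁻¹ * 1 * lam) • v = v) ∧
    -- `η : 𝔡_u → 𝔡_{λu}`, `η(α) = λαλ⁻¹`, is a multiplicative bijection
    Set.BijOn (fun d => lam * d * lam⁻¹) (dstrU p) (dstrU q) ∧
    (∀ d e : F, lam * (d * e) * lam⁻¹ = (lam * d * lam⁻¹) * (lam * e * lam⁻¹)) ∧
    -- compatibility of `(Id, η)` with the scalar actions: `Id (d • v) = η d ⋆ Id v`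
    (∀ d ∈ dstrU p, ∀ v ∈ QU F V p, (lam⁻¹ * (lam * d * lam⁻¹) * lam) • v = d • v) := by
  have hq_distrib :=
    NearVectorSpace.IsInducedAdd.mul_left hq (NearVectorSpace.smul_ne_zero hlam hu0)
  have hpq := NearVectorSpace.IsInducedAdd.mul_right hp hq hu0
  lift lam to Fˣ using
    ⟨⟨lam, lam⁻¹, ScalarGroup.mul_inv_cancel _ hlam, ScalarGroup.inv_mul_cancel _ hlam⟩, rfl⟩
  simp only [← ScalarGroup.val_inv_eq_inv_val] at hpq ⊢
  have hconj : ∀ d ∈ dstrU q, ↑lam⁻¹ * d * ↑lam ∈ dstrU p := fun d hd => by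
    simpa using conj_mem_dstrU lam⁻¹ (mul_val_inv_of_mul_val lam hpq) hd
  refine ⟨fun d hd v hv => NearVectorSpace.smul_mem_QU (hconj d hd) hv, fun d _ e _ v hv => ?_,
    fun v _ => by simp [NearVectorSpace.one_smul], bijOn_conj_dstrU lam hpq,
    fun d e => by simp [mul_assoc],
    fun d _ v _ => by simp [mul_assoc]⟩
  rw [hv.2, hpq, hq_distrib]

/-- `Q_u(V)` is a vector space over `𝔡_{λu}` under the addition of `V` and the
scalar multiplication `α ⋆ v = (λ⁻¹αλ) • v`, and the pair `(Id, η)` with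
`η(α) = λαλ⁻¹` is an isomorphism of near-vector spaces from `Q_u(V)` over `𝔡_u`
to `Q_u(V)` over `𝔡_{λu}`. -/
theorem stmt9 (F V : Type*) [ScalarGroup F] [AddCommGroup V] [NearVectorSpace F V]
    (u : V) (hu : u ∈ quasiKernel F V) (hu0 : u ≠ 0)
    (lam : F) (hlam : lam ≠ 0)
    (p q : F → F → F)
    (hp : ∀ α β : F, α • u + β • u = p α β • u)
    (hq : ∀ α β : F, α • (lam • u) + β • (lam • u) = q α β • (lam • u)) :
    -- `⋆` is a vector space structure of `𝔡_{λu}` on `Q_u(V)`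
    (∀ d ∈ dstrU q, ∀ v ∈ QU F V p, (lam⁻¹ * d * lam) • v ∈ QU F V p) ∧
    (∀ d ∈ dstrU q, ∀ e ∈ dstrU q, ∀ v ∈ QU F V p,
      (lam⁻¹ * d * lam) • v + (lam⁻¹ * e * lam) • v = (lam⁻¹ * q d e * lam) • v) ∧
    (∀ v ∈ QU F V p, (lam⁻¹ * 1 * lam) • v = v) ∧
    -- `η : 𝔡_u → 𝔡_{λu}`, `η(α) = λαλ⁻¹`, is a multiplicative bijection
    Set.BijOn (fun d => lam * d * lam⁻¹) (dstrU p) (dstrU q) ∧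
    (∀ d e : F, lam * (d * e) * lam⁻¹ = (lam * d * lam⁻¹) * (lam * e * lam⁻¹)) ∧
    -- compatibility of `(Id, η)` with the scalar actions: `Id (d • v) = η d ⋆ Id v`
    (∀ d ∈ dstrU p, ∀ v ∈ QU F V p, (lam⁻¹ * (lam * d * lam⁻¹) * lam) • v = d • v) :=
  stmt9_general F V u hu0 lam hlam p q hp hq
end

section
/- Let F be a near-field and I a nonempty index set, and let F^(I) denote the near-vector space of finitely supported F-valued functions on I with componentwise operations. Then the quasi-kernel of F^(I) is exactly Q(F^(I)) = {λ(κ_i)_{i∈I} : λ ∈ F, each κ_i ∈ 𝔡}, where 𝔡 is the set of distributive elements of F. -/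
/-- A left near-field: `(F,+)` is a group, `(F \ {0}, ·)` is a group,
`0` is absorbing, and the left distributive law holds. -/
class LeftNearField (F : Type*) extends AddGroup F, Monoid F, Inv F where
  zero_mul : ∀ a : F, 0 * a = 0
  mul_zero : ∀ a : F, a * 0 = 0
  left_distrib : ∀ a b c : F, a * (b + c) = a * b + a * c
  mul_inv_cancel : ∀ a : F, a ≠ 0 → a * a⁻¹ = 1
  inv_mul_cancel : ∀ a : F, a ≠ 0 → a⁻¹ * a = 1
  one_ne_zero : (1 : F) ≠ 0

/-- The set of left distributive elements of a left near-field. -/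
def dstr (F : Type*) [LeftNearField F] : Set F :=
  {γ : F | ∀ α β : F, (α + β) * γ = α * γ + β * γ}

/-- Scalar multiplication on the canonical near-vector space `F^(I)` of finitely
supported tuples over a near-field `F`. -/
noncomputable def nfSmul {F I : Type*} [LeftNearField F] (a : F) (f : I →₀ F) : I →₀ F :=
  Finsupp.mapRange (fun x => a * x) (LeftNearField.mul_zero a) f

/-!
Normalising a nonzero vector `v` of the quasi-kernel by one of its nonzero entries `v j`
forces the scalar `γ` in `α v + β v = γ v`: reading the equation at `j` gives
`γ = (α + β) (v j)⁻¹` when `α, β` are replaced by `α (v j)⁻¹, β (v j)⁻¹`, and reading it at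
any other `i` then says that `(v j)⁻¹ v i` is distributive. Conversely, on a tuple `k` of
distributive entries `α k + β k = (α + β) k`, which passes to every multiple `l k`.
-/

namespace LeftNearField

variable {F I : Type*} [LeftNearField F]

def quasiKernel (F I : Type*) [LeftNearField F] : Set (I →₀ F) :=
  {v | ∀ α β : F, ∃ γ : F, nfSmul α v + nfSmul β v = nfSmul γ v}

lemma zero_mem_dstr : (0 : F) ∈ dstr F := fun α β => by
  simp only [LeftNearField.mul_zero, add_zero]

@[simp]
lemma nfSmul_apply (a : F) (f : I →₀ F) (i : I) : nfSmul a f i = a * f i := rfl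

lemma nfSmul_nfSmul (a b : F) (f : I →₀ F) : nfSmul a (nfSmul b f) = nfSmul (a * b) f := by
  ext i
  simp only [nfSmul_apply, mul_assoc]

lemma one_nfSmul (f : I →₀ F) : nfSmul 1 f = f := by
  ext i
  simp only [nfSmul_apply, one_mul]

lemma zero_nfSmul (f : I →₀ F) : nfSmul 0 f = 0 := by
  ext i
  simp only [nfSmul_apply, LeftNearField.zero_mul, Finsupp.coe_zero, Pi.zero_apply]

lemma nfSmul_zero (a : F) : nfSmul a (0 : I →₀ F) = 0 := by
  ext i
  simp only [nfSmul_apply, Finsupp.coe_zero, Pi.zero_apply, LeftNearField.mul_zero]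

lemma nfSmul_add_nfSmul_of_forall_mem_dstr {k : I →₀ F} (hk : ∀ i, k i ∈ dstr F) (α β : F) :
    nfSmul α k + nfSmul β k = nfSmul (α + β) k := by
  ext i
  simp only [Finsupp.add_apply, nfSmul_apply, hk i α β]

lemma nfSmul_mem_quasiKernel {k : I →₀ F} (hk : ∀ i, k i ∈ dstr F) (l : F) :
    nfSmul l k ∈ quasiKernel F I := by
  intro α β
  rcases eq_or_ne l 0 with rfl | hl
  · exact ⟨0, by simp only [zero_nfSmul, nfSmul_zero, add_zero]⟩
  refine ⟨(α * l + β * l) * l⁻¹, ?_⟩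
  calc nfSmul α (nfSmul l k) + nfSmul β (nfSmul l k)
      = nfSmul (α * l + β * l) k := by
        rw [nfSmul_nfSmul, nfSmul_nfSmul, nfSmul_add_nfSmul_of_forall_mem_dstr hk]
    _ = nfSmul ((α * l + β * l) * l⁻¹) (nfSmul l k) := by
        rw [nfSmul_nfSmul, mul_assoc, LeftNearField.inv_mul_cancel l hl, mul_one]

lemma eq_of_nfSmul_add_nfSmul_eq {v : I →₀ F} {α β γ : F}
    (h : nfSmul α v + nfSmul β v = nfSmul γ v) {j : I} (hj : v j ≠ 0) :
    γ = (α * v j + β * v j) * (v j)⁻¹ := by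
  have hγ : α * v j + β * v j = γ * v j := by
    simpa only [Finsupp.add_apply, nfSmul_apply] using DFunLike.congr_fun h j
  rw [hγ, mul_assoc, LeftNearField.mul_inv_cancel _ hj, mul_one]

lemma inv_mul_mem_dstr_of_mem_quasiKernel {v : I →₀ F} (hv : v ∈ quasiKernel F I) {j : I}
    (hj : v j ≠ 0) (i : I) : (v j)⁻¹ * v i ∈ dstr F := by
  intro α β
  obtain ⟨γ, hγ⟩ := hv (α * (v j)⁻¹) (β * (v j)⁻¹)
  have hγ_eq : γ = (α + β) * (v j)⁻¹ := by
    rw [eq_of_nfSmul_add_nfSmul_eq hγ hj, mul_assoc α, mul_assoc β,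
      LeftNearField.inv_mul_cancel _ hj, mul_one, mul_one]
  have hγi := DFunLike.congr_fun hγ i
  simp only [Finsupp.add_apply, nfSmul_apply, hγ_eq] at hγi
  simp only [← mul_assoc, hγi]

lemma exists_eq_nfSmul_of_mem_quasiKernel {v : I →₀ F} (hv : v ∈ quasiKernel F I) :
    ∃ (l : F) (k : I →₀ F), (∀ i, k i ∈ dstr F) ∧ v = nfSmul l k := by
  rcases eq_or_ne v 0 with rfl | hv0
  · exact ⟨0, 0, fun _ => zero_mem_dstr, (zero_nfSmul 0).symm⟩
  obtain ⟨j, hj⟩ : ∃ j, v j ≠ 0 := Finsupp.ne_iff.mp hv0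
  refine ⟨v j, nfSmul (v j)⁻¹ v, inv_mul_mem_dstr_of_mem_quasiKernel hv hj, ?_⟩
  rw [nfSmul_nfSmul, LeftNearField.mul_inv_cancel _ hj, one_nfSmul]

end LeftNearField

open LeftNearField in
theorem stmt12_general (F I : Type*) [LeftNearField F] :
    {v : I →₀ F | ∀ α β : F, ∃ γ : F, nfSmul α v + nfSmul β v = nfSmul γ v} =
      {v : I →₀ F | ∃ (l : F) (k : I →₀ F), (∀ i, k i ∈ dstr F) ∧ v = nfSmul l k} :=
  Set.ext fun _ => ⟨exists_eq_nfSmul_of_mem_quasiKernel, fun ⟨l, _, hk, hv⟩ =>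
    hv ▸ nfSmul_mem_quasiKernel hk l⟩

/-- The quasi-kernel of `F^(I)` consists exactly of the scalar multiples of
tuples all of whose entries are distributive elements of `F`. -/
theorem stmt12 (F I : Type*) [LeftNearField F] [Nonempty I] :
    {v : I →₀ F | ∀ α β : F, ∃ γ : F, nfSmul α v + nfSmul β v = nfSmul γ v} =
      {v : I →₀ F | ∃ (l : F) (k : I →₀ F), (∀ i, k i ∈ dstr F) ∧ v = nfSmul l k} :=
  stmt12_general F I
end

section
/- Let V be a nontrivial near-vector space over a scalar group F. Then V is regular (Q(V) = F·Q_u(V) for any nonzero u in the quasi-kernel) if and only if for all v, w ∈ Q(V)\{0}, the near-fields (F, +_v, ·) and (F, +_w, ·) are F-isomorphic as left near-vector spaces over F (i.e., there is an additive bijection θ: F → F with θ(αx) = αθ(x) for all α, x ∈ F, mapping (F,+_v) to (F,+_w)). -/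
/-!
The addition induced by `λ • x` is the addition induced by `x` transported along the right
multiplication `α ↦ α * λ`, and every bijection `θ : F → F` with `θ (α * x) = α * θ x` is such a
right multiplication, by `θ 1 ≠ 0`. So regularity, which writes every nonzero quasi-kernel element
as `λ • x` with `x ∈ Q_u(V)`, and the existence of the isomorphisms `(F, +_v) ≅ (F, +_w)` both say
that all induced additions are related by right multiplications; the two translations are the
freeness of the action and the identity `w = c • (c⁻¹ • w)`.
-/

namespace ScalarGroup

variable {F : Type*} [ScalarGroup F]

theorem mul_inv_cancel_right {c : F} (hc : c ≠ 0) (α : F) : α * c * c⁻¹ = α := by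
  rw [mul_assoc, mul_inv_cancel c hc, mul_one]

theorem inv_mul_cancel_right {c : F} (hc : c ≠ 0) (α : F) : α * c⁻¹ * c = α := by
  rw [mul_assoc, inv_mul_cancel c hc, mul_one]

theorem inv_ne_zero {c : F} (hc : c ≠ 0) : c⁻¹ ≠ 0 := by
  intro h
  refine one_ne_zero (F := F) ?_
  rw [← mul_inv_cancel c hc, h, mul_zero]

theorem bijective_mul_right {c : F} (hc : c ≠ 0) : Function.Bijective (· * c) :=
  Function.bijective_iff_has_inverse.mpr
    ⟨(· * c⁻¹), mul_inv_cancel_right hc, inv_mul_cancel_right hc⟩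

def IsMulRightHom (p q : F → F → F) (c : F) : Prop :=
  ∀ α β : F, p α β * c = q (α * c) (β * c)

theorem IsMulRightHom.inv {p q : F → F → F} {c : F} (hc : c ≠ 0) (h : IsMulRightHom p q c) :
    IsMulRightHom q p c⁻¹ := by
  intro α β
  have := h (α * c⁻¹) (β * c⁻¹)
  rw [inv_mul_cancel_right hc, inv_mul_cancel_right hc] at this
  rw [← this, mul_inv_cancel_right hc]

theorem eq_mul_apply_one {θ : F → F} (hθ : ∀ α x : F, θ (α * x) = α * θ x) (α : F) :
    θ α = α * θ 1 := by
  rw [← hθ, mul_one]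

theorem apply_one_ne_zero {θ : F → F} (hθ : ∀ α x : F, θ (α * x) = α * θ x)
    (hinj : Function.Injective θ) : θ 1 ≠ 0 := by
  intro h
  refine one_ne_zero (F := F) (hinj ?_)
  rw [h, eq_mul_apply_one hθ, zero_mul]

end ScalarGroup

namespace NearVectorSpace

open ScalarGroup

variable {F V : Type*} [ScalarGroup F] [AddCommGroup V] [NearVectorSpace F V]

theorem smul_zero (a : F) : a • (0 : V) = 0 := by
  have h := smul_add a (0 : V) 0
  rw [add_zero] at h
  exact left_eq_add.mp h

theorem zero_mem_QU (p : F → F → F) : (0 : V) ∈ QU F V p := by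
  refine ⟨fun α β => ⟨0, ?_⟩, fun α β => ?_⟩ <;> simp only [smul_zero, add_zero]

theorem smul_mem_quasiKernel {x : V} (hx : x ∈ quasiKernel F V) (c : F) :
    c • x ∈ quasiKernel F V := by
  by_cases hc : c = 0
  · rw [hc, zero_smul]
    exact fun α β => ⟨0, by simp only [smul_zero, add_zero]⟩
  · intro α β
    obtain ⟨γ, hγ⟩ := hx (α * c) (β * c)
    refine ⟨γ * c⁻¹, ?_⟩
    rw [← mul_smul, ← mul_smul, ← mul_smul, hγ, inv_mul_cancel_right hc]

theorem smul_mem_QU_s15 {p q : F → F → F} {v : V} (hv : ∀ α β : F, α • v + β • v = q α β • v)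
    {c : F} (hpq : IsMulRightHom p q c) : c • v ∈ QU F V p := by
  have hcv : ∀ α β : F, α • c • v + β • c • v = p α β • c • v := by
    intro α β
    rw [← mul_smul, ← mul_smul, ← mul_smul, hv, hpq]
  exact ⟨fun α β => ⟨p α β, hcv α β⟩, hcv⟩

theorem isMulRightHom_of_eq_smul {p q : F → F → F} {x w : V} (hx : x ∈ QU F V p) (hx0 : x ≠ 0)
    (hw : ∀ α β : F, α • w + β • w = q α β • w) {c : F} (hwx : w = c • x) :
    IsMulRightHom q p c := by
  intro α β
  refine free _ _ x hx0 ?_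
  rw [mul_smul, ← hwx, ← hw, hwx, ← mul_smul, ← mul_smul, hx.2]

end NearVectorSpace

theorem stmt15_general (F V : Type*) [ScalarGroup F] [AddCommGroup V] [NearVectorSpace F V]
    (P : V → F → F → F)
    (hP : ∀ v ∈ quasiKernel F V, v ≠ 0 → ∀ α β : F, α • v + β • v = P v α β • v) :
    (∀ u ∈ quasiKernel F V, u ≠ 0 →
      quasiKernel F V = {w : V | ∃ lam : F, ∃ x ∈ QU F V (P u), w = lam • x}) ↔
    (∀ v ∈ quasiKernel F V, v ≠ 0 → ∀ w ∈ quasiKernel F V, w ≠ 0 →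
      ∃ θ : F → F, Function.Bijective θ ∧
        (∀ α β : F, θ (P v α β) = P w (θ α) (θ β)) ∧
        (∀ α x : F, θ (α * x) = α * θ x)) := by
  constructor
  · intro hreg v hv hv0 w hw hw0
    obtain ⟨c, x, hx, rfl⟩ : w ∈ {w : V | ∃ lam : F, ∃ x ∈ QU F V (P v), w = lam • x} := by
      rwa [← hreg v hv hv0]
    have hc : c ≠ 0 := by rintro rfl; exact hw0 (NearVectorSpace.zero_smul x)
    have hx0 : x ≠ 0 := by rintro rfl; exact hw0 (NearVectorSpace.smul_zero c)
    have hvw := (NearVectorSpace.isMulRightHom_of_eq_smul hx hx0 (hP _ hw hw0) rfl).inv hc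
    exact ⟨(· * c⁻¹), ScalarGroup.bijective_mul_right (ScalarGroup.inv_ne_zero hc), hvw,
      fun α x => mul_assoc α x c⁻¹⟩
  · intro hiso u hu hu0
    ext w
    refine ⟨fun hw => ?_, ?_⟩
    · by_cases hw0 : w = 0
      · exact ⟨0, 0, NearVectorSpace.zero_mem_QU _, by rw [hw0, NearVectorSpace.zero_smul]⟩
      obtain ⟨θ, hbij, hadd, hlin⟩ := hiso w hw hw0 u hu hu0
      have hc := ScalarGroup.apply_one_ne_zero hlin hbij.1
      have hwu : ScalarGroup.IsMulRightHom (P w) (P u) (θ 1) := fun α β => by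
        simpa only [← ScalarGroup.eq_mul_apply_one hlin] using hadd α β
      refine ⟨θ 1, (θ 1)⁻¹ • w, NearVectorSpace.smul_mem_QU_s15 (hP w hw hw0) (hwu.inv hc), ?_⟩
      rw [← NearVectorSpace.mul_smul, ScalarGroup.mul_inv_cancel _ hc, NearVectorSpace.one_smul]
    · rintro ⟨c, x, hx, rfl⟩
      exact NearVectorSpace.smul_mem_quasiKernel hx.1 c

/-- A nontrivial near-vector space `V` is regular (`Q(V) = F·Q_u(V)` for any
nonzero quasi-kernel element `u`) if and only if for all nonzero
`v, w ∈ Q(V)`, the near-vector spaces `(F, +_v)` and `(F, +_w)` over `F` are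
`F`-isomorphic: there is an additive bijection `θ : (F, +_v) → (F, +_w)` with
`θ(αx) = αθ(x)`. -/
theorem stmt15 (F V : Type*) [ScalarGroup F] [AddCommGroup V] [NearVectorSpace F V]
    (hV : ∃ v : V, v ≠ 0)
    (P : V → F → F → F)
    (hP : ∀ v ∈ quasiKernel F V, v ≠ 0 → ∀ α β : F, α • v + β • v = P v α β • v) :
    (∀ u ∈ quasiKernel F V, u ≠ 0 →
      quasiKernel F V = {w : V | ∃ lam : F, ∃ x ∈ QU F V (P u), w = lam • x}) ↔
    (∀ v ∈ quasiKernel F V, v ≠ 0 → ∀ w ∈ quasiKernel F V, w ≠ 0 →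
      ∃ θ : F → F, Function.Bijective θ ∧
        (∀ α β : F, θ (P v α β) = P w (θ α) (θ β)) ∧
        (∀ α x : F, θ (α * x) = α * θ x)) :=
  stmt15_general F V P hP
end

section
/- Let V be a nontrivial near-vector space over a scalar group F and suppose V is F-isomorphic to the canonical near-vector space F_u^(I) for some nonzero quasi-kernel element u and index set I. Then V decomposes as the internal direct sum V = ⊕_{j∈J} Q_{δ_j u}(V), where {δ_j}_{j∈J} is any basis of F_u as a right vector space over its division ring 𝔡_u of distributive elements; moreover the additions +_{δ_i u} and +_{δ_j u} are pairwise distinct for i ≠ j. -/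
theorem AddSubgroup.eq_zero_of_mem_of_mem_of_sum_eq_zero {ι G : Type*} [AddCommGroup G]
    {H : ι → AddSubgroup G}
    (hind : ∀ (s : Finset ι) (w : ι → G), (∀ j ∈ s, w j ∈ H j) → ∑ j ∈ s, w j = 0 →
      ∀ j ∈ s, w j = 0)
    {i j : ι} (hij : i ≠ j) {x : G} (hi : x ∈ H i) (hj : x ∈ H j) : x = 0 :=
  Submodule.disjoint_def.1 (((iSupIndep_iff_finsetSum_eq_zero_imp_eq_zero
    fun k => (H k).toIntSubmodule).2 hind).pairwiseDisjoint hij) x hi hj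

abbrev ScalarGroup.toMonoidWithZero {F : Type*} [ScalarGroup F] : MonoidWithZero F where
  zero_mul := ScalarGroup.zero_mul
  mul_zero := ScalarGroup.mul_zero

abbrev NearVectorSpace.toDistribMulAction {F V : Type*} [ScalarGroup F] [AddCommGroup V]
    [NearVectorSpace F V] : DistribMulAction F V where
  one_smul := NearVectorSpace.one_smul
  mul_smul := NearVectorSpace.mul_smul
  smul_add := NearVectorSpace.smul_add
  smul_zero a := by
    simpa using (NearVectorSpace.smul_add a (0 : V) 0).symm

section

-- Local: as global instances they would give `0 : F` and `•` a second elaboration path.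
attribute [local instance] ScalarGroup.toMonoidWithZero NearVectorSpace.toDistribMulAction

section InducesAdd

variable {F : Type*} [ScalarGroup F] {p r : F → F → F}

/-- `x ∈ Q_r(F_u)`, for `F_u = (F, p, ·)` viewed as a near-vector space over `F`. -/
def InducesAdd (p : F → F → F) (x : F) (r : F → F → F) : Prop :=
  ∀ a b : F, p (a * x) (b * x) = r a b * x

theorem one_mem_dstrU : (1 : F) ∈ dstrU p := fun a b => by simp only [mul_one]

theorem zero_mem_dstrU (h : p 0 0 = 0) : (0 : F) ∈ dstrU p := fun a b => by
  simp only [mul_zero, h]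

theorem inducesAdd_zero (h : p 0 0 = 0) : InducesAdd p 0 r := fun a b => by
  simp only [mul_zero, h]

theorem InducesAdd.mul {x d : F} (hx : InducesAdd p x r) (hd : d ∈ dstrU p) :
    InducesAdd p (x * d) r := fun a b => by
  rw [← mul_assoc, ← mul_assoc, ← mul_assoc, ← hd, hx]

theorem InducesAdd.inv_mul_mem_dstrU {x y : F} (hx : InducesAdd p x r) (hx0 : x ≠ 0)
    (hy : InducesAdd p y r) : x⁻¹ * y ∈ dstrU p := fun a b => by
  have hab : p a b * x⁻¹ = r (a * x⁻¹) (b * x⁻¹) := by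
    have := hx (a * x⁻¹) (b * x⁻¹)
    simp only [mul_assoc, ScalarGroup.inv_mul_cancel x hx0, mul_one] at this
    rw [this, mul_assoc, ScalarGroup.mul_inv_cancel x hx0, mul_one]
  rw [← mul_assoc, hab, ← hy, mul_assoc, mul_assoc]

end InducesAdd

section InducedAddition

variable {F V : Type*} [ScalarGroup F] [AddCommGroup V] [NearVectorSpace F V]
  {u : V} {p : F → F → F}

def IsInducedAdd (u : V) (p : F → F → F) : Prop :=
  ∀ α β : F, α • u + β • u = p α β • u

theorem NearVectorSpace.smul_left_injective (hu0 : u ≠ 0) : Function.Injective fun a : F => a • u :=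
  fun a b => NearVectorSpace.free a b u hu0

theorem induced_add_zero_zero (hu0 : u ≠ 0) (hp : IsInducedAdd u p) : p 0 0 = 0 :=
  NearVectorSpace.smul_left_injective hu0 <| show p 0 0 • u = 0 • u by
    rw [← hp, NearVectorSpace.zero_smul, add_zero]

theorem usum_smul (hp : IsInducedAdd u p) (l : List F) :
    usum p l • u = (l.map (· • u)).sum := by
  induction l with
  | nil => exact NearVectorSpace.zero_smul u
  | cons a l ih => rw [usum, ← hp, ih, List.map_cons, List.sum_cons]

theorem usum_toList_smul (hp : IsInducedAdd u p) {ι : Type*}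
    (s : Finset ι) (f : ι → F) : usum p (s.toList.map f) • u = ∑ j ∈ s, f j • u := by
  rw [usum_smul hp, List.map_map, ← Finset.sum_map_toList]
  rfl

theorem mem_QU_iff {r : F → F → F} {w : V} :
    w ∈ QU F V r ↔ ∀ a b : F, a • w + b • w = r a b • w :=
  ⟨fun h => h.2, fun h => ⟨fun a b => ⟨r a b, h a b⟩, h⟩⟩

theorem inducesAdd_of_smul_mem_QU (hu0 : u ≠ 0) (hp : IsInducedAdd u p)
    {x : F} {r : F → F → F} (h : x • u ∈ QU F V r) : InducesAdd p x r := fun a b =>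
  NearVectorSpace.smul_left_injective hu0 <| show p (a * x) (b * x) • u = (r a b * x) • u by
    rw [← hp, mul_smul, mul_smul, mul_smul]
    exact mem_QU_iff.1 h a b

end InducedAddition

section QU

variable (F : Type*) {V : Type*} [ScalarGroup F] [AddCommGroup V] [NearVectorSpace F V]

def quSubgroup (r : F → F → F) : AddSubgroup V where
  carrier := QU F V r
  zero_mem' := mem_QU_iff.2 fun a b => by simp only [smul_zero, add_zero]
  add_mem' {v w} hv hw := mem_QU_iff.2 fun a b => by
    rw [smul_add, smul_add, smul_add, ← mem_QU_iff.1 hv, ← mem_QU_iff.1 hw]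
    abel
  neg_mem' {v} hv := mem_QU_iff.2 fun a b => by
    rw [smul_neg, smul_neg, smul_neg, ← mem_QU_iff.1 hv, neg_add]

end QU

/-- An `F`-isomorphism of `V` onto the canonical near-vector space `F_u^(I)`, where `p = +_u`. -/
structure CanonicalIso (F V : Type*) [ScalarGroup F] [AddCommGroup V] [NearVectorSpace F V]
    (p : F → F → F) (I : Type*) where
  toFun : V → I →₀ F
  bijective : Function.Bijective toFun
  map_add : ∀ (v w : V) (i : I), toFun (v + w) i = p (toFun v i) (toFun w i)
  map_smul : ∀ (α : F) (v : V) (i : I), toFun (α • v) i = α * toFun v i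

namespace CanonicalIso

variable {F V I : Type*} [ScalarGroup F] [AddCommGroup V] [NearVectorSpace F V]
  {u : V} {p : F → F → F} (e : CanonicalIso F V p I)

instance : CoeFun (CanonicalIso F V p I) fun _ => V → I →₀ F := ⟨toFun⟩

theorem injective : Function.Injective e := e.bijective.injective

theorem map_zero (i : I) : e 0 i = 0 := by
  simpa only [NearVectorSpace.zero_smul, zero_mul] using e.map_smul 0 0 i

theorem sum_apply_smul (hp : IsInducedAdd u p) {ι : Type*} (s : Finset ι)
    (w : ι → V) (i : I) : e (∑ j ∈ s, w j) i • u = ∑ j ∈ s, e (w j) i • u :=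
  map_sum (AddMonoidHom.mk' (fun v => e v i • u) fun v w => by rw [e.map_add, hp]) w s

theorem mem_QU_iff_forall_inducesAdd {r : F → F → F} {w : V} :
    w ∈ QU F V r ↔ ∀ i, InducesAdd p (e w i) r := by
  rw [mem_QU_iff]
  refine ⟨fun h i a b => ?_, fun h a b => e.injective <| Finsupp.ext fun i => ?_⟩
  · simpa only [e.map_add, e.map_smul] using congrArg (e · i) (h a b)
  · rw [e.map_add, e.map_smul, e.map_smul, e.map_smul, h i]

theorem ext_smul (hu0 : u ≠ 0) {v w : V} (h : ∀ i, e v i • u = e w i • u) : v = w :=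
  e.injective <| Finsupp.ext fun i => NearVectorSpace.smul_left_injective hu0 (h i)

noncomputable def single (i : I) (x : F) : V :=
  Function.surjInv e.bijective.surjective (Finsupp.single i x)

theorem apply_single (i : I) (x : F) : e (e.single i x) = Finsupp.single i x :=
  Function.surjInv_eq _ _

theorem single_usum (hu0 : u ≠ 0) (hp : IsInducedAdd u p) {ι : Type*}
    (i : I) (s : Finset ι) (f : ι → F) :
    e.single i (usum p (s.toList.map f)) = ∑ j ∈ s, e.single i (f j) := by
  classical
  refine e.ext_smul hu0 fun i' => ?_
  rw [e.sum_apply_smul hp]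
  simp only [apply_single, Finsupp.single_apply]
  split_ifs
  · exact usum_toList_smul hp s f
  · simp only [NearVectorSpace.zero_smul, Finset.sum_const_zero]

theorem sum_single (hu0 : u ≠ 0) (hp : IsInducedAdd u p) (v : V) :
    ∑ i ∈ (e v).support, e.single i (e v i) = v := by
  classical
  refine e.ext_smul hu0 fun i' => ?_
  rw [e.sum_apply_smul hp]
  simp only [apply_single, Finsupp.single_apply, ite_smul, NearVectorSpace.zero_smul,
    Finset.sum_ite_eq', Finsupp.mem_support_iff, ne_eq, ite_not]
  split_ifs with h
  · rw [h, NearVectorSpace.zero_smul]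
  · rfl

end CanonicalIso

section Basis

variable {F V J : Type*} [ScalarGroup F] [AddCommGroup V] [NearVectorSpace F V]
  {u : V} {p : F → F → F} {δ : J → F}

def RightLinearIndependent (p : F → F → F) (δ : J → F) : Prop :=
  ∀ (s : Finset J) (c : J → F), (∀ j, c j ∈ dstrU p) →
    usum p (s.toList.map fun j => δ j * c j) = 0 → ∀ j ∈ s, c j = 0

theorem RightLinearIndependent.eq_zero_of_sum_smul_eq_zero (hind : RightLinearIndependent p δ)
    (hu0 : u ≠ 0) (hp : IsInducedAdd u p) {s : Finset J} {c : J → F}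
    (hc : ∀ j ∈ s, c j ∈ dstrU p) (h : ∑ j ∈ s, (δ j * c j) • u = 0) : ∀ j ∈ s, c j = 0 := by
  classical
  intro j hj
  have hc' : ∀ k, (if k ∈ s then c k else 0) ∈ dstrU p := fun k => by
    split_ifs with hk
    exacts [hc k hk, zero_mem_dstrU (induced_add_zero_zero hu0 hp)]
  have hsum : usum p (s.toList.map fun k => δ k * if k ∈ s then c k else 0) = 0 := by
    refine NearVectorSpace.smul_left_injective hu0 ?_
    simp only [usum_toList_smul hp, NearVectorSpace.zero_smul]
    rw [← h]
    exact Finset.sum_congr rfl fun k hk => by rw [if_pos hk]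
  simpa only [if_pos hj] using hind s _ hc' hsum j hj

theorem RightLinearIndependent.ne_zero (hind : RightLinearIndependent p δ) (hu0 : u ≠ 0)
    (hp : IsInducedAdd u p) (j : J) : δ j ≠ 0 := fun h0 =>
  ScalarGroup.one_ne_zero <| hind.eq_zero_of_sum_smul_eq_zero hu0 hp (c := 1)
    (fun _ _ => one_mem_dstrU) (by simp [h0, NearVectorSpace.zero_smul]) j
    (Finset.mem_singleton_self j)

end Basis

namespace CanonicalIso

variable {F V I J : Type*} [ScalarGroup F] [AddCommGroup V] [NearVectorSpace F V]
  {u : V} {p : F → F → F} {δ : J → F} {q : J → F → F → F}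

theorem mem_iSup_quSubgroup (e : CanonicalIso F V p I) (hu0 : u ≠ 0) (hp : IsInducedAdd u p)
    (hgen : ∀ x : F, ∃ (s : Finset J) (c : J → F), (∀ j, c j ∈ dstrU p) ∧
      x = usum p (s.toList.map (fun j => δ j * c j)))
    (hδ : ∀ j, InducesAdd p (δ j) (q j)) (v : V) :
    v ∈ ⨆ j, (quSubgroup F (q j)).toIntSubmodule := by
  classical
  rw [← e.sum_single hu0 hp v]
  refine Submodule.sum_mem _ fun i _ => ?_
  obtain ⟨s, c, hc, hx⟩ := hgen (e v i)
  rw [hx, e.single_usum hu0 hp]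
  refine Submodule.sum_mem _ fun j _ => Submodule.mem_iSup_of_mem j ?_
  refine e.mem_QU_iff_forall_inducesAdd.2 fun i' => ?_
  rw [apply_single, Finsupp.single_apply]
  split_ifs
  exacts [(hδ j).mul (hc j), inducesAdd_zero (induced_add_zero_zero hu0 hp)]

theorem eq_zero_of_sum_mem_QU_eq_zero (e : CanonicalIso F V p I) (hu0 : u ≠ 0)
    (hp : IsInducedAdd u p)
    (hind : RightLinearIndependent p δ)
    (hδ : ∀ j, InducesAdd p (δ j) (q j)) (s : Finset J) (w : J → V)
    (hw : ∀ j ∈ s, w j ∈ QU F V (q j)) (hsum : ∑ j ∈ s, w j = 0) : ∀ j ∈ s, w j = 0 := by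
  intro j hj
  refine e.injective (Finsupp.ext fun i => ?_)
  have hδ0 := hind.ne_zero hu0 hp
  have hc : ∀ k ∈ s, (δ k)⁻¹ * e (w k) i ∈ dstrU p := fun k hk =>
    (hδ k).inv_mul_mem_dstrU (hδ0 k) (e.mem_QU_iff_forall_inducesAdd.1 (hw k hk) i)
  have hδc : ∀ k, δ k * ((δ k)⁻¹ * e (w k) i) = e (w k) i := fun k => by
    rw [← mul_assoc, ScalarGroup.mul_inv_cancel _ (hδ0 k), one_mul]
  have hcoord : ∑ k ∈ s, (δ k * ((δ k)⁻¹ * e (w k) i)) • u = 0 := by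
    simp only [hδc]
    rw [← e.sum_apply_smul hp, hsum, e.map_zero, NearVectorSpace.zero_smul]
  have h0 := hind.eq_zero_of_sum_smul_eq_zero hu0 hp hc hcoord j hj
  rw [← hδc j, h0, mul_zero, e.map_zero]

end CanonicalIso

end

theorem stmt16_general (F V : Type*) [ScalarGroup F] [AddCommGroup V] [NearVectorSpace F V]
    (u : V) (hu0 : u ≠ 0)
    (p : F → F → F) (hp : ∀ α β : F, α • u + β • u = p α β • u)
    (I : Type*)
    (hiso : ∃ φ : V → (I →₀ F), Function.Bijective φ ∧
      (∀ (v w : V) (i : I), φ (v + w) i = p (φ v i) (φ w i)) ∧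
      (∀ (α : F) (v : V) (i : I), φ (α • v) i = α * φ v i))
    {J : Type*} (δ : J → F)
    -- `{δ_j}` is a basis of `F_u` as a right `𝔡_u`-vector space
    (hind : ∀ (s : Finset J) (c : J → F), (∀ j, c j ∈ dstrU p) →
      usum p (s.toList.map (fun j => δ j * c j)) = 0 → ∀ j ∈ s, c j = 0)
    (hgen : ∀ x : F, ∃ (s : Finset J) (c : J → F), (∀ j, c j ∈ dstrU p) ∧
      x = usum p (s.toList.map (fun j => δ j * c j)))
    (q : J → F → F → F)
    (hq : ∀ (j : J) (α β : F),
      α • (δ j • u) + β • (δ j • u) = q j α β • (δ j • u)) :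
    (∀ v : V, ∃ (s : Finset J) (w : J → V),
      (∀ j ∈ s, w j ∈ QU F V (q j)) ∧ v = ∑ j ∈ s, w j) ∧
    (∀ (s : Finset J) (w : J → V), (∀ j ∈ s, w j ∈ QU F V (q j)) →
      ∑ j ∈ s, w j = 0 → ∀ j ∈ s, w j = 0) ∧
    (∀ i j : J, i ≠ j → q i ≠ q j) := by
  obtain ⟨φ, hbij, hadd, hsmul⟩ := hiso
  let e : CanonicalIso F V p I := ⟨φ, hbij, hadd, hsmul⟩
  have hδu : ∀ j, δ j • u ∈ QU F V (q j) := fun j => mem_QU_iff.2 (hq j)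
  have hδ : ∀ j, InducesAdd p (δ j) (q j) := fun j => inducesAdd_of_smul_mem_QU hu0 hp (hδu j)
  have hindep := e.eq_zero_of_sum_mem_QU_eq_zero hu0 hp hind hδ
  refine ⟨fun v => ?_, hindep, fun i j hij hqij => ?_⟩
  · obtain ⟨f, hf, hsum⟩ :=
      (Submodule.mem_iSup_iff_exists_finsupp _ v).1 (e.mem_iSup_quSubgroup hu0 hp hgen hδ v)
    exact ⟨f.support, f, fun j _ => hf j, hsum.symm⟩
  · apply RightLinearIndependent.ne_zero hind hu0 hp j
    refine NearVectorSpace.free _ _ u hu0 ?_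
    rw [NearVectorSpace.zero_smul]
    exact AddSubgroup.eq_zero_of_mem_of_mem_of_sum_eq_zero (H := fun k => quSubgroup F (q k))
      hindep hij (hqij ▸ hδu j) (hδu j)

/-- If a nontrivial near-vector space `V` is `F`-isomorphic to the canonical
near-vector space `F_u^(I)` (finitely supported tuples, componentwise `+_u` and
multiplication), then `V` is the internal direct sum `⊕_{j∈J} Q_{δ_j u}(V)` for
any basis `{δ_j}` of `F_u` as a right vector space over its division ring `𝔡_u`
of distributive elements; moreover the additions `+_{δ_i u}` are pairwise
distinct. -/
theorem stmt16 (F V : Type*) [ScalarGroup F] [AddCommGroup V] [NearVectorSpace F V]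
    (hV : ∃ v : V, v ≠ 0)
    (u : V) (hu : u ∈ quasiKernel F V) (hu0 : u ≠ 0)
    (p : F → F → F) (hp : ∀ α β : F, α • u + β • u = p α β • u)
    (I : Type*)
    (hiso : ∃ φ : V → (I →₀ F), Function.Bijective φ ∧
      (∀ (v w : V) (i : I), φ (v + w) i = p (φ v i) (φ w i)) ∧
      (∀ (α : F) (v : V) (i : I), φ (α • v) i = α * φ v i))
    {J : Type*} (δ : J → F)
    -- `{δ_j}` is a basis of `F_u` as a right `𝔡_u`-vector space
    (hind : ∀ (s : Finset J) (c : J → F), (∀ j, c j ∈ dstrU p) →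
      usum p (s.toList.map (fun j => δ j * c j)) = 0 → ∀ j ∈ s, c j = 0)
    (hgen : ∀ x : F, ∃ (s : Finset J) (c : J → F), (∀ j, c j ∈ dstrU p) ∧
      x = usum p (s.toList.map (fun j => δ j * c j)))
    (q : J → F → F → F)
    (hq : ∀ (j : J) (α β : F),
      α • (δ j • u) + β • (δ j • u) = q j α β • (δ j • u)) :
    (∀ v : V, ∃ (s : Finset J) (w : J → V),
      (∀ j ∈ s, w j ∈ QU F V (q j)) ∧ v = ∑ j ∈ s, w j) ∧
    (∀ (s : Finset J) (w : J → V), (∀ j ∈ s, w j ∈ QU F V (q j)) →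
      ∑ j ∈ s, w j = 0 → ∀ j ∈ s, w j = 0) ∧
    (∀ i j : J, i ≠ j → q i ≠ q j) :=
  stmt16_general F V u hu0 p hp I hiso δ hind hgen q hq
end
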